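/- For every integer s ≥ 2, there exists a linear code over GF(4) of length 4s+4, dimension 3s+1, and minimum distance 4 that has locality 3. Since (4s+4) − (3s+1) − ⌈(3s+1)/3⌉ + 2 = 4, such a code is an optimal (4s+4, 3s+1, 3) LRC meeting the Singleton-like bound. -/
import Mathlib



noncomputable def wt {F : Type*} [Zero F] {ι : Type*} (x : ι → F) : ℕ :=
  {i | x i ≠ 0}.ncard

def dualCode {F : Type*} [Field F] {n : ℕ} (C : Submodule F (Fin n → F)) :
    Submodule F (Fin n → F) where
  carrier := {y | ∀ x ∈ C, ∑ i, x i * y i = 0}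
  add_mem' := by
    intro a b ha hb
    simp only [Set.mem_setOf_eq] at *
    intro z hz
    simp [Pi.add_apply, mul_add, Finset.sum_add_distrib, ha z hz, hb z hz]
  zero_mem' := by
    intro z hz
    simp
  smul_mem' := by
    intro c a ha
    simp only [Set.mem_setOf_eq] at *
    intro z hz
    have h : ∀ i, z i * (c • a) i = c * (z i * a i) := by
      intro i; simp [smul_eq_mul]; ring
    simp only [h, ← Finset.mul_sum, ha z hz, mul_zero]

def isMinDist {F : Type*} [Field F] {ι : Type*} (C : Submodule F (ι → F)) (d : ℕ) : Prop :=
  (∃ x ∈ C, x ≠ 0 ∧ wt x = d) ∧ ∀ x ∈ C, x ≠ 0 → d ≤ wt x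

def hasLocality {F : Type*} [Field F] {n : ℕ} (C : Submodule F (Fin n → F)) (r : ℕ) : Prop :=
  ∀ i : Fin n, ∃ h ∈ dualCode C, h i ≠ 0 ∧ wt h ≤ r + 1

abbrev GF4 := GaloisField 2 2

def ceilDiv (a b : ℕ) : ℕ := (a + b - 1) / b



abbrev GF4' := GaloisField 2 2

lemma h2GF4 : (2:GF4') = 0 := by exact_mod_cast CharP.cast_eq_zero GF4' 2

lemma exists_omega : ∃ ω : GF4', ω ≠ 0 ∧ ω ≠ 1 ∧ ω^2 = ω + 1 := by
  have hcard : Nat.card GF4'ˣ = 3 := by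
    rw [Nat.card_units, GaloisField.card 2 2 (by norm_num)]; norm_num
  have hfin : Finite GF4'ˣ := Nat.finite_of_card_ne_zero (by omega)
  obtain ⟨u, hu⟩ : ∃ u : GF4'ˣ, u ≠ 1 := by
    by_contra h
    push_neg at h
    have hsub : Nat.card GF4'ˣ = 1 :=
      Nat.card_eq_one_iff_unique.mpr ⟨⟨fun a b => by rw [h a, h b]⟩, ⟨1⟩⟩
    omega
  have h3 : (u:GF4')^3 = 1 := by
    have h := pow_card_eq_one' (G := GF4'ˣ) (x := u)
    rw [hcard] at h
    have := congrArg (Units.val) h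
    push_cast at this
    exact this
  refine ⟨u, u.ne_zero, fun h => hu (Units.ext h), ?_⟩
  have hne : (u:GF4') - 1 ≠ 0 := sub_ne_zero.mpr (fun h => hu (Units.ext h))
  have hz : ((u:GF4') - 1) * ((u:GF4')^2 + u + 1) = 0 := by linear_combination h3
  have hthis := (mul_eq_zero.mp hz).resolve_left hne
  linear_combination hthis - ((u:GF4')+1)*h2GF4

lemma vand1 (b c d u v w : GF4') (hbc : b + c ≠ 0) (hbd : b + d ≠ 0)
    (E0 : u + v + w = 0) (E1 : b*u + c*v + d*w = 0)
    (E2 : b^2*u + c^2*v + d^2*w = 0) : u = 0 := by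
  have key : (b+c)*((b+d)*u) = 0 := by
    linear_combination c*d*E0 + (c+d)*E1 + E2 - ((c^2+c*d)*v + (c*d+d^2)*w)*h2GF4
  exact (mul_eq_zero.mp ((mul_eq_zero.mp key).resolve_left hbc)).resolve_left hbd

lemma vand3 (b c d u v w : GF4') (hbc : b + c ≠ 0) (hbd : b + d ≠ 0) (hcd : c + d ≠ 0)
    (E0 : u + v + w = 0) (E1 : b*u + c*v + d*w = 0)
    (E2 : b^2*u + c^2*v + d^2*w = 0) : u = 0 ∧ v = 0 ∧ w = 0 :=
  ⟨vand1 b c d u v w hbc hbd E0 E1 E2,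
   vand1 c b d v u w (by rwa [add_comm]) hcd (by linear_combination E0)
     (by linear_combination E1) (by linear_combination E2),
   vand1 d b c w u v (by rwa [add_comm]) (by rwa [add_comm])
     (by linear_combination E0) (by linear_combination E1) (by linear_combination E2)⟩

def Egp (s : ℕ) : (Fin (s+1) × Fin 4) ≃ Fin (4*s+4) :=
  finProdFinEquiv.trans (finCongr (by ring))

noncomputable def avv (ω : GF4') : Fin 4 → GF4' := ![0, 1, ω, ω+1]

noncomputable def Lmap (s : ℕ) (ω : GF4') :
    (Fin (4*s+4) → GF4') →ₗ[GF4'] ((Fin (s+1) → GF4') × GF4' × GF4') where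
  toFun x := (fun g => ∑ j : Fin 4, x (Egp s (g, j)),
              ∑ p : Fin (s+1) × Fin 4, avv ω p.2 * x (Egp s p),
              ∑ p : Fin (s+1) × Fin 4, (avv ω p.2)^2 * x (Egp s p))
  map_add' x y := by
    simp [Prod.ext_iff, funext_iff, mul_add, Finset.sum_add_distrib]
  map_smul' c x := by
    simp [Prod.ext_iff, funext_iff, Finset.mul_sum, mul_left_comm, smul_eq_mul]

noncomputable def CC (s : ℕ) (ω : GF4') : Submodule GF4' (Fin (4*s+4) → GF4') :=
  LinearMap.ker (Lmap s ω)

lemma mem_CC {s : ℕ} {ω : GF4'} {x : Fin (4*s+4) → GF4'} :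
    x ∈ CC s ω ↔ (∀ g, ∑ j : Fin 4, x (Egp s (g,j)) = 0) ∧
      (∑ p : Fin (s+1) × Fin 4, avv ω p.2 * x (Egp s p) = 0) ∧
      (∑ p : Fin (s+1) × Fin 4, (avv ω p.2)^2 * x (Egp s p) = 0) := by
  simp [CC, Lmap, LinearMap.mem_ker, LinearMap.coe_mk, Prod.ext_iff, funext_iff]

noncomputable def egv (s : ℕ) (g : Fin (s+1)) : Fin (4*s+4) → GF4' :=
  fun i => if (Egp s).symm i = (g, (0:Fin 4)) then 1 else 0

noncomputable def uAv (ω : GF4') : Fin 4 → GF4' := ![ω, 1+ω, 1, 0]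
noncomputable def uBv (ω : GF4') : Fin 4 → GF4' := ![ω+1, ω, 1, 0]

noncomputable def XA (s : ℕ) (ω : GF4') : Fin (4*s+4) → GF4' :=
  fun i => if ((Egp s).symm i).1 = 0 then uAv ω ((Egp s).symm i).2 else 0
noncomputable def XB (s : ℕ) (ω : GF4') : Fin (4*s+4) → GF4' :=
  fun i => if ((Egp s).symm i).1 = 0 then uBv ω ((Egp s).symm i).2 else 0

lemma Lmap_egv (s : ℕ) (ω : GF4') (g : Fin (s+1)) :
    Lmap s ω (egv s g) = ((fun g' => if g' = g then 1 else 0), 0, 0) := by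
  simp only [Lmap, LinearMap.coe_mk, AddHom.coe_mk, egv, Equiv.symm_apply_apply,
    Prod.mk.injEq]
  refine ⟨funext fun g' => ?_, ?_, ?_⟩
  · by_cases h : g' = g <;>
      simp [h, Prod.ext_iff, Finset.sum_ite_eq']
  · simp [mul_ite, Finset.sum_ite_eq', avv]
  · simp [mul_ite, Finset.sum_ite_eq', avv]

lemma Lmap_XA (s : ℕ) (ω : GF4') (hω2 : ω^2 = ω + 1) :
    Lmap s ω (XA s ω) = (0, 1, 0) := by
  simp only [Lmap, LinearMap.coe_mk, AddHom.coe_mk, XA, Equiv.symm_apply_apply, Prod.mk.injEq]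
  refine ⟨funext fun g' => ?_, ?_, ?_⟩
  · by_cases h : g' = 0 <;>
      simp [h, Fin.sum_univ_four, uAv] <;>
      linear_combination (ω+1)*h2GF4
  · rw [Fintype.sum_prod_type]
    rw [Finset.sum_eq_single 0 (fun g' _ hg' => by simp [hg']) (by simp)]
    simp [Fin.sum_univ_four, uAv, avv]
    linear_combination ω*h2GF4
  · rw [Fintype.sum_prod_type]
    rw [Finset.sum_eq_single 0 (fun g' _ hg' => by simp [hg']) (by simp)]
    simp [Fin.sum_univ_four, uAv, avv]
    linear_combination hω2 + (ω+1)*h2GF4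

lemma Lmap_XB (s : ℕ) (ω : GF4') (hω2 : ω^2 = ω + 1) :
    Lmap s ω (XB s ω) = (0, 0, 1) := by
  simp only [Lmap, LinearMap.coe_mk, AddHom.coe_mk, XB, Equiv.symm_apply_apply, Prod.mk.injEq]
  refine ⟨funext fun g' => ?_, ?_, ?_⟩
  · by_cases h : g' = 0 <;>
      simp [h, Fin.sum_univ_four, uBv] <;>
      linear_combination (ω+1)*h2GF4
  · rw [Fintype.sum_prod_type]
    rw [Finset.sum_eq_single 0 (fun g' _ hg' => by simp [hg']) (by simp)]
    simp [Fin.sum_univ_four, uBv, avv]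
    linear_combination ω*h2GF4
  · rw [Fintype.sum_prod_type]
    rw [Finset.sum_eq_single 0 (fun g' _ hg' => by simp [hg']) (by simp)]
    simp [Fin.sum_univ_four, uBv, avv]
    linear_combination hω2 + ω*h2GF4

lemma Lmap_surj (s : ℕ) (ω : GF4') (hω2 : ω^2 = ω + 1) :
    Function.Surjective (Lmap s ω) := by
  rintro ⟨f, t1, t2⟩
  refine ⟨(∑ g, f g • egv s g) + t1 • XA s ω + t2 • XB s ω, ?_⟩
  rw [map_add, map_add, map_sum, map_smul, map_smul, Lmap_XA s ω hω2, Lmap_XB s ω hω2]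
  simp only [map_smul, Lmap_egv]
  refine Prod.ext ?_ (Prod.ext ?_ ?_)
  · simp only [Prod.fst_sum, Prod.fst_add, Prod.smul_mk, Prod.mk_add_mk]
    funext g'
    simp [Finset.sum_apply, Finset.sum_ite_eq, smul_eq_mul, mul_ite]
  · simp [Prod.snd_sum, Prod.fst_sum, smul_eq_mul]
  · simp [Prod.snd_sum, smul_eq_mul]

lemma finrank_CC (s : ℕ) (ω : GF4') (hω2 : ω^2 = ω + 1) :
    Module.finrank GF4' (CC s ω) = 3*s + 1 := by
  have h := LinearMap.finrank_range_add_finrank_ker (Lmap s ω)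
  rw [LinearMap.range_eq_top.mpr (Lmap_surj s ω hω2), finrank_top] at h
  simp only [Module.finrank_prod, Module.finrank_pi, Module.finrank_self,
    Fintype.card_fin] at h
  unfold CC
  omega



noncomputable def gind (s : ℕ) (g : Fin (s+1)) : Fin (4*s+4) → GF4' :=
  fun i => if ((Egp s).symm i).1 = g then 1 else 0

lemma wt_gind (s : ℕ) (g : Fin (s+1)) : wt (gind s g) = 4 := by
  have hset : {i | gind s g i ≠ 0} = (Egp s) '' (Set.range fun j : Fin 4 => (g, j)) := by
    ext i
    simp only [gind, Set.mem_setOf_eq, ne_eq, ite_eq_right_iff, one_ne_zero, imp_false,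
      not_not, Set.mem_image, Set.mem_range]
    constructor
    · intro h
      refine ⟨(g, ((Egp s).symm i).2), ⟨((Egp s).symm i).2, rfl⟩, ?_⟩
      rw [show ((g, ((Egp s).symm i).2) : Fin (s+1) × Fin 4) = (Egp s).symm i by
        rw [← h]]
      simp
    · rintro ⟨p, ⟨j, rfl⟩, rfl⟩
      simp
  rw [wt, hset, Set.ncard_image_of_injective _ (Egp s).injective,
    ← Set.image_univ, Set.ncard_image_of_injective _ (fun a b hab => by simpa using hab),
    Set.ncard_univ]
  simp

lemma gind_dual (s : ℕ) (ω : GF4') (g : Fin (s+1)) :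
    ∀ x ∈ CC s ω, ∑ i, x i * gind s g i = 0 := by
  intro x hx
  obtain ⟨hg, -, -⟩ := mem_CC.mp hx
  rw [← Equiv.sum_comp (Egp s) (fun i => x i * gind s g i)]
  simp only [gind, Equiv.symm_apply_apply]
  rw [Fintype.sum_prod_type]
  rw [Finset.sum_eq_single g (fun g' _ hg' => by simp [hg']) (by simp)]
  simpa using hg g

lemma gind_mem (s : ℕ) (ω : GF4') (hω2 : ω^2 = ω + 1) : gind s 0 ∈ CC s ω := by
  rw [mem_CC]
  refine ⟨fun g => ?_, ?_, ?_⟩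
  · simp only [gind, Equiv.symm_apply_apply]
    by_cases h : g = 0 <;> simp [h, Fin.sum_univ_four]
    linear_combination 2*h2GF4
  · simp only [gind, Equiv.symm_apply_apply]
    rw [Fintype.sum_prod_type]
    rw [Finset.sum_eq_single 0 (fun g' _ hg' => by simp [hg']) (by simp)]
    simp [Fin.sum_univ_four, avv]
    linear_combination (ω+1)*h2GF4
  · simp only [gind, Equiv.symm_apply_apply]
    rw [Fintype.sum_prod_type]
    rw [Finset.sum_eq_single 0 (fun g' _ hg' => by simp [hg']) (by simp)]
    simp [Fin.sum_univ_four, avv]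
    linear_combination 2*hω2 + (2*ω+2)*h2GF4

lemma group_full (s : ℕ) (ω : GF4') (hω0 : ω ≠ 0) (hω1 : ω ≠ 1)
    (y : Fin (s+1) × Fin 4 → GF4') (g : Fin (s+1))
    (E0 : ∑ j : Fin 4, y (g,j) = 0)
    (E1 : ∑ j : Fin 4, avv ω j * y (g,j) = 0)
    (E2 : ∑ j : Fin 4, (avv ω j)^2 * y (g,j) = 0)
    (k : Fin 4) (hk : y (g,k) = 0) : ∀ j, y (g,j) = 0 := by
  have n01 : (0:GF4') + 1 ≠ 0 := fun h => one_ne_zero (α := GF4') (by linear_combination h)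
  have n0ω : (0:GF4') + ω ≠ 0 := fun h => hω0 (by linear_combination h)
  have n0ω1 : (0:GF4') + (ω+1) ≠ 0 := fun h => hω1 (by linear_combination h - h2GF4)
  have n1ω : (1:GF4') + ω ≠ 0 := fun h => hω1 (by linear_combination h - h2GF4)
  have n1ω1 : (1:GF4') + (ω+1) ≠ 0 := fun h => hω0 (by linear_combination h - h2GF4)
  have nωω1 : ω + (ω+1) ≠ 0 := fun h => one_ne_zero (α := GF4') (by linear_combination h - ω*h2GF4)
  rw [Fin.sum_univ_four] at E0 E1 E2
  simp only [avv] at E1 E2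
  rw [show ((![0, 1, ω, ω+1] : Fin 4 → GF4') 0) = 0 from rfl,
    show ((![0, 1, ω, ω+1] : Fin 4 → GF4') 1) = 1 from rfl,
    show ((![0, 1, ω, ω+1] : Fin 4 → GF4') 2) = ω from rfl,
    show ((![0, 1, ω, ω+1] : Fin 4 → GF4') 3) = ω+1 from rfl] at E1 E2
  set u := y (g, 0) with hu
  set v := y (g, 1) with hv
  set w := y (g, 2) with hw
  set z := y (g, 3) with hz
  have hall : u = 0 ∧ v = 0 ∧ w = 0 ∧ z = 0 := by
    fin_cases k
    · replace hk : u = 0 := hk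
      have h := vand3 1 ω (ω+1) v w z n1ω n1ω1 nωω1
        (by linear_combination E0 - hk) (by linear_combination E1)
        (by linear_combination E2)
      exact ⟨hk, h.1, h.2.1, h.2.2⟩
    · replace hk : v = 0 := hk
      have h := vand3 0 ω (ω+1) u w z n0ω n0ω1 nωω1
        (by linear_combination E0 - hk) (by linear_combination E1 - hk)
        (by linear_combination E2 - hk)
      exact ⟨h.1, hk, h.2.1, h.2.2⟩
    · replace hk : w = 0 := hk
      have h := vand3 0 1 (ω+1) u v z n01 n0ω1 n1ω1
        (by linear_combination E0 - hk) (by linear_combination E1 - ω*hk)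
        (by linear_combination E2 - ω^2*hk)
      exact ⟨h.1, h.2.1, hk, h.2.2⟩
    · replace hk : z = 0 := hk
      have h := vand3 0 1 ω u v w n01 n0ω n1ω
        (by linear_combination E0 - hk) (by linear_combination E1 - (ω+1)*hk)
        (by linear_combination E2 - (ω+1)^2*hk)
      exact ⟨h.1, h.2.1, h.2.2, hk⟩
  intro j
  fin_cases j
  · exact hall.1
  · exact hall.2.1
  · exact hall.2.2.1
  · exact hall.2.2.2

lemma wt_lower (s : ℕ) (ω : GF4') (hω0 : ω ≠ 0) (hω1 : ω ≠ 1)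
    (x : Fin (4*s+4) → GF4') (hx : x ∈ CC s ω) (hx0 : x ≠ 0) : 4 ≤ wt x := by
  obtain ⟨hg, hA, hB⟩ := mem_CC.mp hx
  set y : Fin (s+1) × Fin 4 → GF4' := fun p => x (Egp s p) with hy
  have hwt : wt x = {p | y p ≠ 0}.ncard := by
    rw [wt]
    have himg : {i | x i ≠ 0} = (Egp s) '' {p | y p ≠ 0} := by
      ext i
      constructor
      · intro hi
        exact ⟨(Egp s).symm i, by simpa [hy] using hi, by simp⟩
      · rintro ⟨p, hp, rfl⟩
        simpa [hy] using hp
    rw [himg, Set.ncard_image_of_injective _ (Egp s).injective]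
  rw [hwt]
  obtain ⟨i0, hi0⟩ : ∃ i, x i ≠ 0 := by
    by_contra h
    push_neg at h
    exact hx0 (funext fun i => h i)
  set p0 := (Egp s).symm i0 with hp0def
  have hp0 : y p0 ≠ 0 := by simpa [hy, hp0def] using hi0
  by_cases hall : ∀ p, y p ≠ 0 → p.1 = p0.1
  · -- all support in group p0.1
    set g := p0.1 with hgdef
    have hvanish : ∀ g' : Fin (s+1), g' ≠ g → ∀ j, y (g', j) = 0 := by
      intro g' hne j
      by_contra h
      exact hne (hall _ h)
    have hAg : ∑ j : Fin 4, avv ω j * y (g, j) = 0 := by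
      rw [Fintype.sum_prod_type] at hA
      rwa [Finset.sum_eq_single g (fun g' _ hne => by
        apply Finset.sum_eq_zero
        intro j _
        show avv ω j * y (g', j) = 0
        rw [hvanish g' hne j, mul_zero]) (fun h => absurd (Finset.mem_univ g) h)] at hA
    have hBg : ∑ j : Fin 4, (avv ω j)^2 * y (g, j) = 0 := by
      rw [Fintype.sum_prod_type] at hB
      rwa [Finset.sum_eq_single g (fun g' _ hne => by
        apply Finset.sum_eq_zero
        intro j _
        show (avv ω j)^2 * y (g', j) = 0
        rw [hvanish g' hne j, mul_zero]) (fun h => absurd (Finset.mem_univ g) h)] at hB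
    have hfull : ∀ j, y (g, j) ≠ 0 := by
      intro j hjz
      have hallz := group_full s ω hω0 hω1 y g (hg g) hAg hBg j hjz
      exact hp0 (hallz p0.2)
    have hsub : (Set.range fun j : Fin 4 => ((g : Fin (s+1)), j)) ⊆ {p | y p ≠ 0} := by
      rintro _ ⟨j, rfl⟩
      exact hfull j
    calc (4:ℕ) = (Set.range fun j : Fin 4 => ((g : Fin (s+1)), j)).ncard := by
          rw [← Set.image_univ, Set.ncard_image_of_injective _
            (fun a b hab => by simpa using hab), Set.ncard_univ]
          simp
      _ ≤ {p | y p ≠ 0}.ncard := Set.ncard_le_ncard hsub (Set.toFinite _)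
  · push_neg at hall
    obtain ⟨p1, hp1, hne⟩ := hall
    have second : ∀ p : Fin (s+1) × Fin 4, y p ≠ 0 → ∃ j, j ≠ p.2 ∧ y (p.1, j) ≠ 0 := by
      intro p hp
      by_contra h
      push_neg at h
      have hsum := hg p.1
      rw [Finset.sum_eq_single p.2 (fun j _ hj => h j hj) (fun hmem => absurd (Finset.mem_univ p.2) hmem)] at hsum
      exact hp (by rwa [Prod.mk.eta] at hsum)
    obtain ⟨j0, hj0ne, hj0⟩ := second p0 hp0
    obtain ⟨j1, hj1ne, hj1⟩ := second p1 hp1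
    have hsub : (↑({p0, (p0.1, j0), p1, (p1.1, j1)} : Finset (Fin (s+1) × Fin 4)) : Set _)
        ⊆ {p | y p ≠ 0} := by
      intro p hp
      simp only [Finset.coe_insert, Set.mem_insert_iff, Finset.coe_singleton,
        Set.mem_singleton_iff] at hp
      rcases hp with rfl | rfl | rfl | rfl
      · exact hp0
      · exact hj0
      · exact hp1
      · exact hj1
    have hcard : ({p0, (p0.1, j0), p1, (p1.1, j1)} : Finset (Fin (s+1) × Fin 4)).card = 4 := by
      rw [Finset.card_insert_of_notMem (by
        simp only [Finset.mem_insert, Finset.mem_singleton]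
        push_neg
        refine ⟨?_, ?_, ?_⟩
        · intro h; exact hj0ne (congrArg Prod.snd h).symm
        · intro h; exact hne (congrArg Prod.fst h).symm
        · intro h; exact hne (congrArg Prod.fst h).symm),
        Finset.card_insert_of_notMem (by
        simp only [Finset.mem_insert, Finset.mem_singleton]
        push_neg
        refine ⟨?_, ?_⟩
        · intro h; exact hne (congrArg Prod.fst h).symm
        · intro h; exact hne (congrArg Prod.fst h).symm),
        Finset.card_insert_of_notMem (by
        simp only [Finset.mem_singleton]
        intro h
        exact hj1ne (congrArg Prod.snd h).symm),
        Finset.card_singleton]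
    calc (4:ℕ) = ({p0, (p0.1, j0), p1, (p1.1, j1)} : Finset (Fin (s+1) × Fin 4)).card := hcard.symm
      _ = (↑({p0, (p0.1, j0), p1, (p1.1, j1)} : Finset (Fin (s+1) × Fin 4)) : Set _).ncard :=
          (Set.ncard_coe_finset _).symm
      _ ≤ {p | y p ≠ 0}.ncard := Set.ncard_le_ncard hsub (Set.toFinite _)

/-- for s ≥ 2 there exists an optimal quaternary
(4s+4, 3s+1, 3) LRC with minimum distance 4. -/
theorem stmt_16 (s : ℕ) (hs : 2 ≤ s) :
    ∃ C : Submodule GF4 (Fin (4 * s + 4) → GF4),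
      Module.finrank GF4 C = 3 * s + 1 ∧ isMinDist C 4 ∧ hasLocality C 3 := by
  obtain ⟨ω, hω0, hω1, hω2⟩ := exists_omega
  refine ⟨CC s ω, finrank_CC s ω hω2,
    ⟨⟨gind s 0, gind_mem s ω hω2, ?_, wt_gind s 0⟩,
      fun x hx hx0 => wt_lower s ω hω0 hω1 x hx hx0⟩, ?_⟩
  · intro h
    have := congrFun h (Egp s (0, 0))
    simp [gind] at this
  · intro i
    refine ⟨gind s ((Egp s).symm i).1, ?_, ?_, ?_⟩
    · exact gind_dual s ω ((Egp s).symm i).1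
    · simp [gind]
    · rw [wt_gind]
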